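/- For every k ≥ 1, the k-fold blocked tensor M_k^{(x)} of the Majorana-shift MPO tensor with ancilla (blocked with the fermionic blocking signs) satisfies r(M_k^{(x)}) = 2·d^k and ℓ(M_k^{(x)}) = d^k, where d = 2x is the physical dimension. -/

import Mathlib

open Matrix Kronecker
open scoped ComplexOrder

namespace FQCA

noncomputable section

/-- The sign `(-1)^x` associated with a parity `x ∈ ℤ₂`. -/
def sgn (x : ZMod 2) : ℂ := (-1 : ℂ) ^ x.val

/-- Entrywise complex conjugation of a matrix. -/
def mconj {m n : Type*} (A : Matrix m n ℂ) : Matrix m n ℂ := A.map (starRingEnd ℂ)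

/-- A diagonal matrix with diagonal entries `±1`. -/
def IsParityMatrix {ν : Type*} (Z : Matrix ν ν ℂ) : Prop :=
  Z.IsDiag ∧ ∀ α, Z α α = 1 ∨ Z α α = -1

/-- An even tensor: `Z * A i = (-1)^{|i|} A i * Z`. -/
def EvenTensor {ι ν : Type*} [Fintype ν] (p : ι → ZMod 2)
    (A : ι → Matrix ν ν ℂ) (Z : Matrix ν ν ℂ) : Prop :=
  ∀ i, Z * A i = sgn (p i) • (A i * Z)

/-- The transfer matrix `E_A = Σ_i A^i ⊗ conj (A^i)`. -/
def transfer {ι ν : Type*} [Fintype ι] (A : ι → Matrix ν ν ℂ) :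
    Matrix (ν × ν) (ν × ν) ℂ :=
  ∑ i, (A i) ⊗ₖ (mconj (A i))

/-- `P` is the orthogonal projector of a nonzero proper graded invariant subspace for `A`. -/
def GradedInvariantProj {ι ν : Type*} [Fintype ν] [DecidableEq ν]
    (A : ι → Matrix ν ν ℂ) (Z P : Matrix ν ν ℂ) : Prop :=
  P * P = P ∧ Pᴴ = P ∧ P ≠ 0 ∧ P ≠ 1 ∧ P * Z = Z * P ∧ ∀ i, A i * P = P * (A i * P)

/-- A graded irreducible tensor: no nonzero proper graded invariant subspace. -/
def GradedIrreducible {ι ν : Type*} [Fintype ν] [DecidableEq ν]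
    (A : ι → Matrix ν ν ℂ) (Z : Matrix ν ν ℂ) : Prop :=
  ¬ ∃ P, GradedInvariantProj A Z P

/-- A graded normal tensor, `mult = 1` (non-degenerate) or `2` (degenerate):
graded irreducible, `1` is an eigenvalue of the transfer matrix of algebraic multiplicity
`mult`, and all other eigenvalues have modulus `< 1`. -/
def GradedNormal {ι ν : Type*} [Fintype ι] [Fintype ν] [DecidableEq ν]
    (A : ι → Matrix ν ν ℂ) (Z : Matrix ν ν ℂ) (mult : ℕ) : Prop :=
  GradedIrreducible A Z ∧
  (Matrix.charpoly (transfer A)).rootMultiplicity 1 = mult ∧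
  ∀ μ ∈ spectrum ℂ (transfer A), μ ≠ 1 → ‖μ‖ < 1

/-- Graded Canonical Form: `A^i = ⊕ₖ μₖ Aₖ^i` with `Z` block diagonal in the same way and
every block a graded normal tensor. -/
def GCF {ι ν : Type*} [Fintype ι] [Fintype ν] [DecidableEq ν]
    (p : ι → ZMod 2) (A : ι → Matrix ν ν ℂ) (Z : Matrix ν ν ℂ) : Prop :=
  ∃ (g : ℕ) (Dk : Fin g → ℕ) (e : ν ≃ ((k : Fin g) × Fin (Dk k)))
    (μ : Fin g → ℂ)
    (Ak : (k : Fin g) → ι → Matrix (Fin (Dk k)) (Fin (Dk k)) ℂ)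
    (Zk : (k : Fin g) → Matrix (Fin (Dk k)) (Fin (Dk k)) ℂ),
    0 < g ∧
    (∀ i, Matrix.reindex e e (A i) = Matrix.blockDiagonal' (fun k => μ k • Ak k i)) ∧
    Matrix.reindex e e Z = Matrix.blockDiagonal' Zk ∧
    ∀ k, IsParityMatrix (Zk k) ∧ EvenTensor p (Ak k) (Zk k) ∧
      (GradedNormal (Ak k) (Zk k) 1 ∨ GradedNormal (Ak k) (Zk k) 2)

/-- The coefficient `tr(A^{n₁} ⋯ A^{n_N})` of the fMPS with antiperiodic boundary
conditions generated by the tensor `A`. -/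
def mpsCoeff {ι ν : Type*} [Fintype ν] [DecidableEq ν] {N : ℕ}
    (A : ι → Matrix ν ν ℂ) (n : Fin N → ι) : ℂ :=
  ((List.ofFn fun j => A (n j)).prod).trace

/-- The fermionic sign `σ(n,m) = Σ_{k<j} (|n_j|+|m_j|)·|m_k|` of an fMPO matrix element. -/
def mpoSign {ι : Type*} (p : ι → ZMod 2) {N : ℕ} (n m : Fin N → ι) : ZMod 2 :=
  ∑ jk ∈ Finset.univ.filter (fun jk : Fin N × Fin N => jk.2 < jk.1),
    (p (n jk.1) + p (m jk.1)) * p (m jk.2)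

/-- The fMPO with antiperiodic boundary conditions generated by the MPO tensor `U`. -/
def fMPO {ι : Type*} (p : ι → ZMod 2) {ν : Type*} [Fintype ν] [DecidableEq ν]
    (U : ι → ι → Matrix ν ν ℂ) (N : ℕ) :
    Matrix (Fin N → ι) (Fin N → ι) ℂ :=
  Matrix.of fun n m =>
    sgn (mpoSign p n m) * ((List.ofFn fun j => U (n j) (m j)).prod).trace

/-- The fMPO with periodic boundary conditions generated by the MPO tensor `U`
(parity operator `Z` inserted in the trace). -/
def fMPO_PBC {ι : Type*} (p : ι → ZMod 2) {ν : Type*} [Fintype ν] [DecidableEq ν]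
    (Z : Matrix ν ν ℂ) (U : ι → ι → Matrix ν ν ℂ) (N : ℕ) :
    Matrix (Fin N → ι) (Fin N → ι) ℂ :=
  Matrix.of fun n m =>
    sgn (mpoSign p n m) * (Z * (List.ofFn fun j => U (n j) (m j)).prod).trace

/-- The fermionic blocking sign `τ(n,m) = Σ_{j<l} |m_j|·(|n_l|+|m_l|)`. -/
def blockSign {ι : Type*} (p : ι → ZMod 2) {q : ℕ} (n m : Fin q → ι) : ZMod 2 :=
  ∑ jl ∈ Finset.univ.filter (fun jl : Fin q × Fin q => jl.1 < jl.2),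
    p (m jl.1) * (p (n jl.2) + p (m jl.2))

/-- The `q`-fold blocked MPO tensor, with the fermionic blocking signs. -/
def blocked {ι : Type*} (p : ι → ZMod 2) {ν : Type*} [Fintype ν] [DecidableEq ν]
    (U : ι → ι → Matrix ν ν ℂ) (q : ℕ) :
    (Fin q → ι) → (Fin q → ι) → Matrix ν ν ℂ :=
  fun n m => sgn (blockSign p n m) • ((List.ofFn fun j => U (n j) (m j)).prod)

/-- The right rank `r(U)`: rank of the matrix with entry
`(-1)^{|n||m|} (U^{n,m})_{α,β}` in row `(n,β)` and column `(m,α)`. -/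
def rightRank {ι ν : Type*} [Fintype ι] [Fintype ν]
    (p : ι → ZMod 2) (U : ι → ι → Matrix ν ν ℂ) : ℕ :=
  (Matrix.of fun (r c : ι × ν) => sgn (p r.1 * p c.1) * U r.1 c.1 c.2 r.2).rank

/-- The left rank `ℓ(U)`: rank of the matrix with entry `(U^{n,m})_{α,β}`
in row `(n,α)` and column `(m,β)`. -/
def leftRank {ι ν : Type*} [Fintype ι] [Fintype ν]
    (U : ι → ι → Matrix ν ν ℂ) : ℕ :=
  (Matrix.of fun (r c : ι × ν) => U r.1 c.1 r.2 c.2).rank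

/-- The Pauli matrix `σˣ`, indexed by `Bool`. -/
def pauliX : Matrix Bool Bool ℂ := Matrix.of fun a b => if a = b then 0 else 1

/-- The Pauli matrix `σᶻ`, indexed by `Bool`. -/
def pauliZ : Matrix Bool Bool ℂ := Matrix.diagonal (fun b => if b then -1 else 1)

/-- The single-site physical parity matrix `P = diag((-1)^{|i|})`. -/
def singleP {ι : Type*} [DecidableEq ι] (p : ι → ZMod 2) : Matrix ι ι ℂ :=
  Matrix.diagonal (fun i => sgn (p i))

/-- The parity of the doubled physical index `(n,m)` of an MPO tensor. -/
def doubledP {ι : Type*} (p : ι → ZMod 2) : ι × ι → ZMod 2 :=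
  fun nm => p nm.1 + p nm.2

/-- An MPO tensor regarded as a tensor in the doubled physical index. -/
def doubledT {ι ν : Type*} (U : ι → ι → Matrix ν ν ℂ) : ι × ι → Matrix ν ν ℂ :=
  fun nm => U nm.1 nm.2

/-- An MPO tensor rescaled by `c`, regarded as a tensor in the doubled physical index. -/
def mpoScaled {ι ν : Type*} (c : ℂ) (U : ι → ι → Matrix ν ν ℂ) : ι × ι → Matrix ν ν ℂ :=
  fun nm => c • U nm.1 nm.2

/-- The parity operator `σᶻ ⊗ I` on the bond space `Bool × Fin b`. -/
def ZBP (b : ℕ) : Matrix (Bool × Fin b) (Bool × Fin b) ℂ :=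
  pauliZ ⊗ₖ (1 : Matrix (Fin b) (Fin b) ℂ)

/-- Structure of a type II MPO tensor: `U^{n,m} = (σˣ)^{|n|+|m|} ⊗ N^{n,m}`. -/
def TypeIIStruct {d b : ℕ} (p : Fin d → ZMod 2)
    (U : Fin d → Fin d → Matrix (Bool × Fin b) (Bool × Fin b) ℂ) : Prop :=
  ∃ Nm : Fin d → Fin d → Matrix (Fin b) (Fin b) ℂ,
    ∀ n m', U n m' = (pauliX ^ (p n + p m').val) ⊗ₖ Nm n m'

/-- The parity matrix of the product grading on `q` sites. -/
def bigP {d : ℕ} (p : Fin d → ZMod 2) (q : ℕ) :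
    Matrix (Fin q → Fin d) (Fin q → Fin d) ℂ :=
  Matrix.diagonal (fun n => sgn (∑ i, p (n i)))

/-- The Jordan-Wigner embedding at site `j` of a local operator `O` homogeneous of
parity `o`: `P^{|O|} ⊗ ⋯ ⊗ P^{|O|} ⊗ O ⊗ I ⊗ ⋯ ⊗ I`. -/
def jordanWigner {d N : ℕ} (p : Fin d → ZMod 2) (o : ZMod 2)
    (O : Matrix (Fin d) (Fin d) ℂ) (j : Fin N) :
    Matrix (Fin N → Fin d) (Fin N → Fin d) ℂ :=
  Matrix.of fun n m =>
    (∏ l ∈ Finset.univ.filter (fun l : Fin N => l < j),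
      ((singleP p) ^ o.val) (n l) (m l)) *
    O (n j) (m j) *
    (∏ l ∈ Finset.univ.filter (fun l : Fin N => j < l),
      (if n l = m l then (1:ℂ) else 0))

/-- Physical parity of the Majorana-shift tensor with ancilla:
`|(n,a)| = n + |a| mod 2`. -/
def pMaj {x : ℕ} (pa : Fin x → ZMod 2) : Fin 2 × Fin x → ZMod 2 :=
  fun na => ((na.1 : ℕ) : ZMod 2) + pa na.2

/-- The Pauli matrix `σˣ` on the two-dimensional bond space `Fin 2`. -/
def sigmaX2 : Matrix (Fin 2) (Fin 2) ℂ := Matrix.of fun a b => if a = b then 0 else 1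

/-- The Majorana-shift MPO tensor with ancilla:
`M^{(n,a),(m,b)} = δ_{a,b} · 2^{-1/2} · iᵐ · (σˣ)^{n+m}`. -/
def MajTensor {x : ℕ} :
    (Fin 2 × Fin x) → (Fin 2 × Fin x) → Matrix (Fin 2) (Fin 2) ℂ :=
  fun na mb =>
    if na.2 = mb.2 then
      (((Real.sqrt 2 : ℂ))⁻¹ * Complex.I ^ ((mb.1 : ℕ))) •
        (sigmaX2 ^ ((na.1 : ℕ) + (mb.1 : ℕ)))
    else 0

end

end FQCA

/-!
Up to nonzero factors depending only on the row or only on the column, the entries of both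
blocked matrices vanish unless the two indices lie in the same sector (equal ancilla labels,
and equal bond index plus total occupation mod 2), and inside a sector the blocking sign is
the bilinear character `(-1)^(v ⬝ w)` of a Hadamard matrix, with `v`, `w` linear images of the
two occupation vectors. For the right rank the extra sign `(-1)^(|n||m|)` turns the strict
prefix sums of the blocking sign into inclusive ones, which are invertible, so each of the
`2xᵏ` sectors carries a full `2ᵏ × 2ᵏ` Hadamard block. For the left rank the strict prefix
sums forget the first occupation of the row and the last of the column, leaving a
`2ᵏ⁻¹ × 2ᵏ⁻¹` Hadamard block per sector.
-/

namespace Matrix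

variable {R : Type*} [Field R] {m n m₀ n₀ : Type*} [Fintype n]

lemma rank_eq_card_of_transpose_mul_self_eq_smul_one [Fintype m] [DecidableEq n]
    (N : Matrix m n R) {c : R} (hc : c ≠ 0) (h : Nᵀ * N = c • 1) : N.rank = Fintype.card n := by
  classical
  refine le_antisymm N.rank_le_card_width ?_
  calc Fintype.card n = (c • (1 : Matrix n n R)).rank := by
        rw [smul_one_eq_diagonal, rank_diagonal]
        simp [hc]
    _ ≤ N.rank := h ▸ rank_mul_le_right Nᵀ N

lemma rank_submatrix_of_surjective [Fintype n₀] (A : Matrix m n R) {f : m₀ → m} {g : n₀ → n}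
    (hf : Function.Surjective f) (hg : Function.Surjective g) :
    (A.submatrix f g).rank = A.rank := by
  refine le_antisymm (A.rank_submatrix_le f g) ?_
  have h := (A.submatrix f g).rank_submatrix_le (Function.surjInv hf) (Function.surjInv hg)
  rwa [submatrix_submatrix, (Function.rightInverse_surjInv hf).comp_eq_id,
    (Function.rightInverse_surjInv hg).comp_eq_id, submatrix_id_id] at h

lemma rank_diagonal_mul_mul_diagonal [Fintype m] [DecidableEq m] [DecidableEq n]
    (A : Matrix m n R) {φ : m → R} {ψ : n → R} (hφ : ∀ i, φ i ≠ 0) (hψ : ∀ j, ψ j ≠ 0) :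
    (diagonal φ * A * diagonal ψ).rank = A.rank := by
  rw [rank_mul_eq_left_of_isUnit_det, rank_mul_eq_right_of_isUnit_det] <;>
    simp [det_diagonal, Finset.prod_ne_zero_iff, hφ, hψ]

end Matrix

lemma List.prod_ofFn_ite_smul_pow {R A : Type*} [CommSemiring R] [Semiring A] [Algebra R A]
    {q : ℕ} (P : Fin q → Prop) [DecidablePred P] (c : Fin q → R) (X : A) (s : Fin q → ℕ) :
    (List.ofFn fun j => if P j then c j • X ^ s j else 0).prod =
      if ∀ j, P j then (∏ j, c j) • X ^ ∑ j, s j else 0 := by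
  induction q with
  | zero => simp
  | succ q ih =>
    rw [List.ofFn_succ, List.prod_cons, ih (fun j => P j.succ) (fun j => c j.succ)
      (fun j => s j.succ), Fin.prod_univ_succ, Fin.sum_univ_succ]
    by_cases h0 : P 0 <;> by_cases ht : ∀ j : Fin q, P j.succ <;>
      simp [h0, ht, Fin.forall_fin_succ, pow_add, smul_smul, mul_comm]

namespace FQCA

lemma sgn_add (a b : ZMod 2) : sgn (a + b) = sgn a * sgn b := by
  rw [sgn, sgn, sgn, ZMod.val_add, ← neg_one_pow_eq_pow_mod_two, pow_add]

lemma sgn_ne_zero (a : ZMod 2) : sgn a ≠ 0 := pow_ne_zero _ (by norm_num)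

lemma sgn_sum {α : Type*} (s : Finset α) (f : α → ZMod 2) :
    sgn (∑ i ∈ s, f i) = ∏ i ∈ s, sgn (f i) := by
  induction s using Finset.cons_induction with
  | empty => rfl
  | cons a s ha ih => rw [Finset.sum_cons, Finset.prod_cons, sgn_add, ih]

lemma sum_sgn_mul (c : ZMod 2) : ∑ b : ZMod 2, sgn (b * c) = if c = 0 then 2 else 0 := by
  rw [show (Finset.univ : Finset (ZMod 2)) = {0, 1} from rfl, Finset.sum_pair (by decide)]
  obtain rfl | rfl : c = 0 ∨ c = 1 := by revert c; decide
  all_goals norm_num [sgn, ZMod.val_one]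

lemma sum_sgn_dotProduct {q : ℕ} (t : Fin q → ZMod 2) :
    ∑ v : Fin q → ZMod 2, sgn (v ⬝ᵥ t) = if t = 0 then 2 ^ q else 0 := by
  calc ∑ v : Fin q → ZMod 2, sgn (v ⬝ᵥ t)
      = ∑ v : Fin q → ZMod 2, ∏ j, sgn (v j * t j) := by simp only [dotProduct, sgn_sum]
    _ = ∏ j, ∑ b : ZMod 2, sgn (b * t j) := (Fintype.prod_sum fun j b => sgn (b * t j)).symm
    _ = if t = 0 then 2 ^ q else 0 := by
      simp only [sum_sgn_mul]
      rw [Fintype.prod_ite_zero]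
      simp [funext_iff]

def hadamard (q : ℕ) : Matrix (Fin q → ZMod 2) (Fin q → ZMod 2) ℂ :=
  Matrix.of fun v w => sgn (v ⬝ᵥ w)

lemma hadamard_transpose_mul_self (q : ℕ) :
    (hadamard q)ᵀ * hadamard q = (2 ^ q : ℂ) • 1 := by
  ext w w'
  have hpair : ∀ v : Fin q → ZMod 2, sgn (v ⬝ᵥ w) * sgn (v ⬝ᵥ w') = sgn (v ⬝ᵥ (w + w')) := by
    intro v; rw [dotProduct_add, sgn_add]
  have hzero : w + w' = 0 ↔ w = w' := by
    rw [add_eq_zero_iff_eq_neg, ZModModule.neg_eq_self]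
  simp only [Matrix.mul_apply, Matrix.transpose_apply, hadamard, Matrix.of_apply, hpair,
    sum_sgn_dotProduct, hzero, Matrix.smul_apply, Matrix.one_apply, smul_eq_mul, mul_ite,
    mul_one, mul_zero]

lemma rank_blockDiagonal_hadamard (q : ℕ) (K : Type*) [Fintype K] [DecidableEq K] :
    (blockDiagonal fun _ : K => hadamard q).rank = 2 ^ q * Fintype.card K := by
  have hB : (blockDiagonal fun _ : K => hadamard q)ᵀ * blockDiagonal (fun _ : K => hadamard q)
      = (2 ^ q : ℂ) • 1 := by
    rw [blockDiagonal_transpose, ← blockDiagonal_mul, hadamard_transpose_mul_self,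
      ← blockDiagonal_one, ← blockDiagonal_smul]
    rfl
  rw [rank_eq_card_of_transpose_mul_self_eq_smul_one _ (by norm_num) hB,
    Fintype.card_prod, Fintype.card_fun, ZMod.card, Fintype.card_fin]

lemma rank_eq_of_apply_eq_hadamard {ι κ K : Type*} [Fintype ι] [Fintype κ] [Fintype K]
    [DecidableEq ι] [DecidableEq κ] [DecidableEq K] {q : ℕ} (M : Matrix ι κ ℂ)
    {f : ι → (Fin q → ZMod 2) × K} {g : κ → (Fin q → ZMod 2) × K}
    (hf : Function.Surjective f) (hg : Function.Surjective g) {φ : ι → ℂ} {ψ : κ → ℂ}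
    (hφ : ∀ i, φ i ≠ 0) (hψ : ∀ j, ψ j ≠ 0)
    (hM : ∀ i j, M i j =
      φ i * (if (f i).2 = (g j).2 then sgn ((f i).1 ⬝ᵥ (g j).1) else 0) * ψ j) :
    M.rank = 2 ^ q * Fintype.card K := by
  have hM' : M = diagonal φ * (blockDiagonal fun _ : K => hadamard q).submatrix f g *
      diagonal ψ := by
    ext i j
    simp only [hM, Matrix.mul_diagonal, Matrix.diagonal_mul, Matrix.submatrix_apply,
      blockDiagonal_apply, hadamard, Matrix.of_apply]
  rw [hM', rank_diagonal_mul_mul_diagonal _ hφ hψ,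
    rank_submatrix_of_surjective _ hf hg, rank_blockDiagonal_hadamard]

section PairSums

variable {R : Type*} {q : ℕ}

def prefixSums [AddCommMonoid R] (w : Fin q → R) : Fin q → R :=
  fun l => ∑ j ∈ Finset.Iic l, w j

lemma prefixSums_apply_eq_sum_ite [AddCommMonoid R] (w : Fin q → R) (l : Fin q) :
    prefixSums w l = ∑ j, if j ≤ l then w j else 0 := by
  rw [prefixSums, ← Finset.sum_filter]
  congr 1
  ext j
  simp

lemma prefixSums_surjective [CommRing R] :
    Function.Surjective (prefixSums (R := R) (q := q)) := by
  set L : Matrix (Fin q) (Fin q) R := Matrix.of fun l j => if j ≤ l then 1 else 0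
  have hL : prefixSums = L.mulVec := by
    funext w l
    simp [prefixSums_apply_eq_sum_ite, L, mulVec, dotProduct]
  have hlower : L.IsLowerTriangular := fun l j hlj => if_neg (not_le.mpr hlj)
  rw [hL, mulVec_surjective_iff_isUnit, isUnit_iff_isUnit_det, det_of_isLowerTriangular L hlower]
  simp [L]

def orderedPairSum [CommSemiring R] (u v : Fin q → R) : R :=
  ∑ jl ∈ Finset.univ.filter (fun jl : Fin q × Fin q => jl.1 < jl.2), u jl.1 * v jl.2

lemma orderedPairSum_add_left [CommSemiring R] (u u' v : Fin q → R) :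
    orderedPairSum (u + u') v = orderedPairSum u v + orderedPairSum u' v := by
  simp only [orderedPairSum, Pi.add_apply, add_mul, Finset.sum_add_distrib]

lemma orderedPairSum_add_right [CommSemiring R] (u v v' : Fin q → R) :
    orderedPairSum u (v + v') = orderedPairSum u v + orderedPairSum u v' := by
  simp only [orderedPairSum, Pi.add_apply, mul_add, Finset.sum_add_distrib]

lemma orderedPairSum_eq_sum_mul_sum [CommSemiring R] (u v : Fin q → R) :
    orderedPairSum u v = ∑ j, u j * ∑ l, if j < l then v l else 0 := by
  rw [orderedPairSum, Finset.sum_filter, Fintype.sum_prod_type]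
  simp only [Finset.mul_sum, mul_ite, mul_zero]

lemma orderedPairSum_eq_tail_dotProduct [CommSemiring R] (u v : Fin (q + 1) → R) :
    orderedPairSum u v = Fin.tail v ⬝ᵥ prefixSums (Fin.init u) := by
  rw [orderedPairSum, Finset.sum_filter, Fintype.sum_prod_type_right, Fin.sum_univ_succ]
  simp only [Fin.not_lt_zero, if_false, Finset.sum_const_zero, zero_add, dotProduct,
    Fin.tail, prefixSums_apply_eq_sum_ite, Fin.init, Finset.mul_sum,
    Fin.sum_univ_castSucc, Fin.castSucc_lt_succ_iff, mul_ite, mul_zero,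
    (Fin.le_last _).not_gt, add_zero]
  exact Finset.sum_congr rfl fun l _ => Finset.sum_congr rfl fun j _ => by rw [mul_comm]

lemma orderedPairSum_add_sum_mul_sum [CommRing R] [CharP R 2] (u v : Fin q → R) :
    orderedPairSum u v + (∑ j, u j) * (∑ l, v l) = prefixSums v ⬝ᵥ u := by
  rw [orderedPairSum_eq_sum_mul_sum, Finset.sum_mul, ← Finset.sum_add_distrib, dotProduct]
  refine Finset.sum_congr rfl fun j _ => ?_
  rw [← mul_add, ← Finset.sum_add_distrib, prefixSums_apply_eq_sum_ite, mul_comm]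
  congr 1
  refine Finset.sum_congr rfl fun l _ => ?_
  split_ifs with hlt hle hle <;> simp [CharTwo.add_self_eq_zero]
  all_goals order

end PairSums

lemma sigmaX2_pow_apply (s : ℕ) (α β : Fin 2) :
    (sigmaX2 ^ s) α β = if ((α : ℕ) : ZMod 2) + s = ((β : ℕ) : ZMod 2) then 1 else 0 := by
  have hsq : sigmaX2 ^ 2 = 1 := by
    ext i j
    fin_cases i <;> fin_cases j <;> simp [sq, sigmaX2, Matrix.mul_apply, Fin.sum_univ_two]
  conv_lhs => rw [← Nat.mod_add_div s 2, pow_add, pow_mul, hsq, one_pow, mul_one]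
  rw [← ZMod.natCast_mod s 2]
  obtain h | h := Nat.mod_two_eq_zero_or_one s <;> rw [h] <;>
    fin_cases α <;> fin_cases β <;> simp [sigmaX2, CharTwo.add_self_eq_zero]

section Majorana

variable {x k : ℕ}

def occupation (n : Fin k → Fin 2 × Fin x) : Fin k → ZMod 2 := fun j => (((n j).1 : ℕ) : ZMod 2)

def ancilla (n : Fin k → Fin 2 × Fin x) : Fin k → Fin x := fun j => (n j).2

def sector (r : (Fin k → Fin 2 × Fin x) × Fin 2) : (Fin k → Fin x) × ZMod 2 :=
  (ancilla r.1, ((r.2 : ℕ) : ZMod 2) + ∑ j, occupation r.1 j)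

noncomputable def majWeight (m : Fin k → Fin 2 × Fin x) : ℂ :=
  ∏ j, ((Real.sqrt 2 : ℂ))⁻¹ * Complex.I ^ ((m j).1 : ℕ)

lemma majWeight_ne_zero (m : Fin k → Fin 2 × Fin x) : majWeight m ≠ 0 :=
  Finset.prod_ne_zero_iff.mpr fun _ _ =>
    mul_ne_zero (inv_ne_zero (by simp)) (pow_ne_zero _ Complex.I_ne_zero)

lemma surjective_occupation_sector {V : Type*} {T : (Fin k → ZMod 2) → V}
    (hT : Function.Surjective T) :
    Function.Surjective fun r : (Fin k → Fin 2 × Fin x) × Fin 2 =>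
      (T (occupation r.1), sector r) := by
  rintro ⟨w, a, s⟩
  obtain ⟨ε, rfl⟩ := hT w
  set n : Fin k → Fin 2 × Fin x := fun j => (⟨(ε j).val, ZMod.val_lt _⟩, a j)
  have hocc : occupation n = ε := funext fun j => ZMod.natCast_zmod_val (ε j)
  refine ⟨(n, ⟨(s - ∑ j, ε j).val, ZMod.val_lt _⟩), ?_⟩
  simp only [sector, hocc, n, ZMod.natCast_zmod_val, sub_add_cancel]
  rfl

lemma blocked_majTensor_apply (pa : Fin x → ZMod 2) (n m : Fin k → Fin 2 × Fin x)
    (α β : Fin 2) :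
    blocked (pMaj pa) MajTensor k n m α β =
      if sector (n, α) = sector (m, β) then sgn (blockSign (pMaj pa) n m) * majWeight m
      else 0 := by
  have hprod := List.prod_ofFn_ite_smul_pow (fun j => (n j).2 = (m j).2)
    (fun j => ((Real.sqrt 2 : ℂ))⁻¹ * Complex.I ^ ((m j).1 : ℕ)) sigmaX2
    (fun j => ((n j).1 : ℕ) + ((m j).1 : ℕ))
  have hsector : sector (n, α) = sector (m, β) ↔ ancilla n = ancilla m ∧
      ((α : ℕ) : ZMod 2) + (((∑ j, (((n j).1 : ℕ) + ((m j).1 : ℕ)) : ℕ)) : ZMod 2) =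
        ((β : ℕ) : ZMod 2) := by
    simp only [sector, Prod.mk.injEq, Nat.cast_sum, Nat.cast_add, Finset.sum_add_distrib,
      occupation, ← add_assoc, CharTwo.add_eq_iff_eq_add (c := ((β : ℕ) : ZMod 2))]
  rw [blocked, Matrix.smul_apply, smul_eq_mul]
  simp only [MajTensor] at hprod ⊢
  rw [hprod]
  by_cases hanc : ancilla n = ancilla m
  · have hall : ∀ j, (n j).2 = (m j).2 := congrFun hanc
    simp only [if_pos hall, Matrix.smul_apply, smul_eq_mul, sigmaX2_pow_apply, hsector,
      hanc, true_and, majWeight]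
    split_ifs <;> ring
  · have hall : ¬ ∀ j, (n j).2 = (m j).2 := fun h => hanc (funext h)
    simp [hall, hsector, hanc]

end Majorana

section MajoranaRanks

variable {x : ℕ} (pa : Fin x → ZMod 2)

lemma sum_pMaj {k : ℕ} (n : Fin k → Fin 2 × Fin x) :
    ∑ j, pMaj pa (n j) = ∑ j, occupation n j + ∑ j, pa (ancilla n j) :=
  Finset.sum_add_distrib

lemma blockSign_pMaj {k : ℕ} {n m : Fin k → Fin 2 × Fin x} (h : ancilla n = ancilla m) :
    blockSign (pMaj pa) n m =
      orderedPairSum (pa ∘ ancilla n) (occupation n) +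
        orderedPairSum (occupation m + pa ∘ ancilla m) (occupation m) +
        orderedPairSum (occupation m) (occupation n) := by
  have hparity : (fun l => pMaj pa (n l) + pMaj pa (m l)) = occupation n + occupation m := by
    funext l
    simp only [pMaj, Pi.add_apply, occupation, show (n l).2 = (m l).2 from congrFun h l]
    linear_combination pa (m l).2 * CharTwo.two_eq_zero (R := ZMod 2)
  change orderedPairSum (occupation m + pa ∘ ancilla m) (fun l => pMaj pa (n l) + pMaj pa (m l))
    = _
  rw [hparity, h, orderedPairSum_add_right, orderedPairSum_add_left]
  abel

lemma parity_mul_add_blockSign_pMaj {k : ℕ} {n m : Fin k → Fin 2 × Fin x}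
    (h : ancilla n = ancilla m) :
    (∑ j, pMaj pa (n j)) * (∑ j, pMaj pa (m j)) + blockSign (pMaj pa) n m =
      (orderedPairSum (pa ∘ ancilla n) (occupation n) +
          (∑ j, pa (ancilla n j)) * (∑ j, occupation n j) + ∑ j, pa (ancilla n j)) +
        (orderedPairSum (occupation m + pa ∘ ancilla m) (occupation m) +
          (∑ j, pa (ancilla m j)) * ∑ j, occupation m j) +
        prefixSums (occupation n) ⬝ᵥ occupation m := by
  have hcross := orderedPairSum_add_sum_mul_sum (occupation m) (occupation n)
  have hidem : ∀ a : ZMod 2, a * a = a := by decide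
  rw [sum_pMaj, sum_pMaj, blockSign_pMaj pa h, ← hcross, h]
  linear_combination hidem (∑ j, pa (ancilla m j))

lemma rightRank_blocked_majTensor (k : ℕ) :
    rightRank (fun n : Fin k → Fin 2 × Fin x => ∑ j, pMaj pa (n j))
      (blocked (pMaj pa) MajTensor k) = 2 * (2 * x) ^ k := by
  rw [rightRank, rank_eq_of_apply_eq_hadamard _
    (surjective_occupation_sector prefixSums_surjective)
    (surjective_occupation_sector Function.surjective_id)
    (φ := fun r => sgn (orderedPairSum (pa ∘ ancilla r.1) (occupation r.1) +
      (∑ j, pa (ancilla r.1 j)) * (∑ j, occupation r.1 j) + ∑ j, pa (ancilla r.1 j)))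
    (ψ := fun c => sgn (orderedPairSum (occupation c.1 + pa ∘ ancilla c.1) (occupation c.1) +
      (∑ j, pa (ancilla c.1 j)) * ∑ j, occupation c.1 j) * majWeight c.1)
    (fun _ => sgn_ne_zero _) (fun _ => mul_ne_zero (sgn_ne_zero _) (majWeight_ne_zero _))]
  · simp only [Fintype.card_prod, Fintype.card_fun, ZMod.card, Fintype.card_fin]
    ring
  rintro ⟨n, β⟩ ⟨m, α⟩
  have hsector : sector (n, β) = sector (m, α) ↔ sector (n, α) = sector (m, β) := by
    have hswap : ∀ a b c d : ZMod 2, a + b = c + d ↔ c + b = a + d := by decide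
    simp only [sector, Prod.mk.injEq]
    exact and_congr_right fun _ => hswap _ _ _ _
  simp only [Matrix.of_apply, blocked_majTensor_apply, hsector]
  split_ifs with hs
  · rw [← mul_assoc, ← sgn_add, parity_mul_add_blockSign_pMaj pa (congrArg Prod.fst hs),
      sgn_add, sgn_add, id_eq]
    ring
  · simp

lemma leftRank_blocked_majTensor (k : ℕ) :
    leftRank (blocked (pMaj pa) MajTensor (k + 1)) = (2 * x) ^ (k + 1) := by
  rw [leftRank, rank_eq_of_apply_eq_hadamard _
    (surjective_occupation_sector fun w => ⟨Fin.cons 0 w, Fin.tail_cons _ _⟩)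
    (surjective_occupation_sector
      (prefixSums_surjective.comp fun w => ⟨Fin.snoc w 0, Fin.init_snoc _ _⟩))
    (φ := fun r => sgn (orderedPairSum (pa ∘ ancilla r.1) (occupation r.1)))
    (ψ := fun c => sgn (orderedPairSum (occupation c.1 + pa ∘ ancilla c.1) (occupation c.1)) *
      majWeight c.1)
    (fun _ => sgn_ne_zero _) (fun _ => mul_ne_zero (sgn_ne_zero _) (majWeight_ne_zero _))]
  · simp only [Fintype.card_prod, Fintype.card_fun, ZMod.card, Fintype.card_fin]
    ring
  rintro ⟨n, α⟩ ⟨m, β⟩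
  simp only [Matrix.of_apply, blocked_majTensor_apply]
  split_ifs with hs
  · rw [blockSign_pMaj pa (congrArg Prod.fst hs),
      orderedPairSum_eq_tail_dotProduct (occupation m), sgn_add, sgn_add, Function.comp_apply]
    ring
  · simp

end MajoranaRanks

theorem majorana_blocked_ranks_general {x : ℕ} (pa : Fin x → ZMod 2)
    (k : ℕ) (hk : 1 ≤ k) :
    rightRank (fun n : Fin k → Fin 2 × Fin x => ∑ j, pMaj pa (n j))
        (blocked (pMaj pa) MajTensor k) = 2 * (2 * x) ^ k ∧
    leftRank (blocked (pMaj pa) MajTensor k) = (2 * x) ^ k := by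
  obtain ⟨k, rfl⟩ := Nat.exists_eq_add_of_le' hk
  exact ⟨rightRank_blocked_majTensor pa _, leftRank_blocked_majTensor pa k⟩

/-- The `k`-fold blocked Majorana-shift tensor with ancilla has right
rank `2·dᵏ` and left rank `dᵏ`, where `d = 2x`. -/
theorem majorana_blocked_ranks {x : ℕ} (hx : 1 ≤ x) (pa : Fin x → ZMod 2)
    (k : ℕ) (hk : 1 ≤ k) :
    rightRank (fun n : Fin k → Fin 2 × Fin x => ∑ j, pMaj pa (n j))
        (blocked (pMaj pa) MajTensor k) = 2 * (2 * x) ^ k ∧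
    leftRank (blocked (pMaj pa) MajTensor k) = (2 * x) ^ k :=
  majorana_blocked_ranks_general pa k hk

end FQCA
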